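/- arXiv:2002.07519 — 5 statements merged into one kernel-verified Lean document; each statement's English description precedes it below -/
import Mathlib

section
/- Let R be a unique factorization domain and let M ⊆ N be finitely generated R-modules such that M is a free R-module. If the quotient N/M contains a non-zero pseudo-null R-submodule, then N itself contains a non-zero pseudo-null R-submodule. -/
/-- An `R`-submodule `P` of `M` is *pseudo-null* if every element of `P` is annihilated by
two relatively prime elements of `R` (i.e., in a UFD, by two elements sharing no common
prime factor). -/
def Submodule.IsPseudoNull {R M : Type*} [CommRing R] [AddCommGroup M] [Module R M]
    (P : Submodule R M) : Prop :=
  ∀ x ∈ P, ∃ r s : R, IsRelPrime r s ∧ r • x = 0 ∧ s • x = 0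

/-!
Pick `x ∈ N` whose class is a non-zero element of the pseudo-null submodule, annihilated modulo
`M` by relatively prime `r, s`. In `M` we have `s • (r • x) = r • (s • x)`, and since `M` is free
over a UFD every coordinate of `r • x` is divisible by `r`, so `r • x = r • m` for some `m ∈ M`.
Then `z = x - m` is killed by `r`, hence `s • z ∈ M` is `r`-torsion, so zero as `M` is torsion
free. Thus `z` has the same non-zero class as `x` and spans a pseudo-null submodule of `N`.
-/

theorem Module.Basis.exists_eq_smul_of_forall_dvd_repr {R M ι : Type*} [Semiring R]
    [AddCommMonoid M] [Module R M] (b : Module.Basis ι R M) {r : R} {m : M}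
    (h : ∀ i, r ∣ b.repr m i) : ∃ m' : M, m = r • m' := by
  choose c hc using h
  refine ⟨∑ i ∈ (b.repr m).support, c i • b i, ?_⟩
  conv_lhs => rw [← b.linearCombination_repr m]
  simp only [Finsupp.linearCombination_apply, Finsupp.sum, Finset.smul_sum, smul_smul, ← hc]

theorem IsRelPrime.exists_eq_smul_of_smul_eq_smul {R M : Type*} [CommSemiring R]
    [DecompositionMonoid R] [AddCommMonoid M] [Module R M] [Module.Free R M] {r s : R}
    (hrs : IsRelPrime r s) {m m' : M} (h : s • m = r • m') : ∃ m'' : M, m = r • m'' := by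
  let b := Module.Free.chooseBasis R M
  refine b.exists_eq_smul_of_forall_dvd_repr fun i ↦ hrs.dvd_of_dvd_mul_left ⟨b.repr m' i, ?_⟩
  simpa using congr(b.repr $h i)

theorem Submodule.exists_sub_mem_smul_eq_zero_of_isRelPrime {R N : Type*} [CommRing R]
    [IsDomain R] [DecompositionMonoid R] [AddCommGroup N] [Module R N] {M : Submodule R N}
    [Module.Free R M] {r s : R} (hrs : IsRelPrime r s) {x : N} (hrx : r • x ∈ M)
    (hsx : s • x ∈ M) : ∃ z : N, x - z ∈ M ∧ r • z = 0 ∧ s • z = 0 := by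
  rcases eq_or_ne r 0 with rfl | hr
  · have hx : x ∈ M := (M.smul_mem_iff_of_isUnit (isRelPrime_zero_left.mp hrs)).mp hsx
    exact ⟨0, by simpa using hx, smul_zero _, smul_zero _⟩
  obtain ⟨m, hm⟩ := hrs.exists_eq_smul_of_smul_eq_smul
    (m := (⟨r • x, hrx⟩ : M)) (m' := ⟨s • x, hsx⟩) (Subtype.ext (smul_comm s r x))
  have hrz : r • (x - m) = 0 := by
    rw [smul_sub, sub_eq_zero]
    exact congr(Subtype.val $hm)
  have hsz_mem : s • (x - m) ∈ M := by
    rw [smul_sub]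
    exact M.sub_mem hsx (M.smul_mem s m.2)
  have hsz : (⟨s • (x - m), hsz_mem⟩ : M) = 0 := by
    refine (smul_eq_zero.mp (Subtype.ext ?_ : r • (⟨_, hsz_mem⟩ : M) = 0)).resolve_left hr
    simp only [SetLike.val_smul, smul_comm r s, hrz, smul_zero, ZeroMemClass.coe_zero]
  exact ⟨x - m, by simp, hrz, congr(Subtype.val $hsz)⟩

theorem Submodule.isPseudoNull_span_singleton {R N : Type*} [CommRing R] [AddCommGroup N]
    [Module R N] {r s : R} (hrs : IsRelPrime r s) {z : N} (hr : r • z = 0) (hs : s • z = 0) :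
    (span R {z}).IsPseudoNull := by
  intro w hw
  obtain ⟨a, rfl⟩ := mem_span_singleton.mp hw
  exact ⟨r, s, hrs, by rw [smul_comm, hr, smul_zero], by rw [smul_comm, hs, smul_zero]⟩

theorem exists_pseudoNull_submodule_of_quotient_general {R : Type*} [CommRing R] [IsDomain R]
    [UniqueFactorizationMonoid R] {N : Type*} [AddCommGroup N] [Module R N]
    (M : Submodule R N) (hMfree : Module.Free R M)
    (h : ∃ P : Submodule R (N ⧸ M), P ≠ ⊥ ∧ P.IsPseudoNull) :
    ∃ P : Submodule R N, P ≠ ⊥ ∧ P.IsPseudoNull := by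
  obtain ⟨P, hPbot, hP⟩ := h
  obtain ⟨y, hyP, hy0⟩ := P.exists_mem_ne_zero_of_ne_bot hPbot
  obtain ⟨r, s, hrs, hry, hsy⟩ := hP y hyP
  obtain ⟨x, rfl⟩ := Submodule.Quotient.mk_surjective M y
  rw [← Submodule.Quotient.mk_smul, Submodule.Quotient.mk_eq_zero] at hry hsy
  obtain ⟨z, hxz, hrz, hsz⟩ := M.exists_sub_mem_smul_eq_zero_of_isRelPrime hrs hry hsy
  refine ⟨Submodule.span R {z}, ?_, Submodule.isPseudoNull_span_singleton hrs hrz hsz⟩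
  rw [Ne, Submodule.span_singleton_eq_bot]
  rintro rfl
  exact hy0 ((Submodule.Quotient.mk_eq_zero M).mpr (by simpa using hxz))

/-- Let `R` be a unique factorization domain and `M ⊆ N` finitely generated `R`-modules with
`M` free.  If `N/M` contains a non-zero pseudo-null `R`-submodule, then so does `N`. -/
theorem exists_pseudoNull_submodule_of_quotient {R : Type*} [CommRing R] [IsDomain R]
    [UniqueFactorizationMonoid R] {N : Type*} [AddCommGroup N] [Module R N]
    [Module.Finite R N] (M : Submodule R N) (hMfg : M.FG) (hMfree : Module.Free R M)
    (h : ∃ P : Submodule R (N ⧸ M), P ≠ ⊥ ∧ P.IsPseudoNull) :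
    ∃ P : Submodule R N, P ≠ ⊥ ∧ P.IsPseudoNull :=
  exists_pseudoNull_submodule_of_quotient_general M hMfree h
end

section
/- Let R be a unique factorization domain, N a finitely generated torsion-free R-module, and x ∈ N. Then the quotient module N/Rx contains no non-zero pseudo-null R-submodule. -/
namespace Submodule

variable {R M : Type*} [CommRing R] [IsCancelMulZero R] [DecompositionMonoid R]
  [AddCommGroup M] [Module R M] [Module.IsTorsionFree R M]

theorem mem_span_singleton_of_isRelPrime {x z : M} {r s : R} (hrs : IsRelPrime r s)
    (hr : r • z ∈ R ∙ x) (hs : s • z ∈ R ∙ x) : z ∈ R ∙ x := by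
  obtain rfl | hr0 := eq_or_ne r 0
  · exact (smul_mem_iff_of_isUnit _ (isRelPrime_zero_left.mp hrs)).mp hs
  obtain rfl | hx0 := eq_or_ne x 0
  · rw [span_singleton_eq_bot.mpr rfl, mem_bot] at hr ⊢
    rw [smul_eq_zero] at hr
    exact hr.resolve_left hr0
  obtain ⟨a, ha⟩ := mem_span_singleton.mp hr
  obtain ⟨b, hb⟩ := mem_span_singleton.mp hs
  have hsa : s * a = r * b := smul_left_injective R hx0 <| by
    simp only [mul_smul, ha, hb, smul_comm s r]
  obtain ⟨c, rfl⟩ := hrs.dvd_of_dvd_mul_left ⟨b, hsa⟩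
  refine mem_span_singleton.mpr ⟨c, smul_right_injective M hr0 ?_⟩
  simpa only [smul_smul] using ha

theorem Quotient.eq_zero_of_isRelPrime_of_smul_eq_zero {x : M} {y : M ⧸ (R ∙ x)} {r s : R}
    (hrs : IsRelPrime r s) (hr : r • y = 0) (hs : s • y = 0) : y = 0 := by
  obtain ⟨z, rfl⟩ := Quotient.mk_surjective _ y
  rw [← Quotient.mk_smul, Quotient.mk_eq_zero] at hr hs
  exact (Quotient.mk_eq_zero _).mpr (mem_span_singleton_of_isRelPrime hrs hr hs)

end Submodule

theorem pseudoNull_submodule_of_quotient_span_singleton_eq_bot_general {R : Type*} [CommRing R]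
    [IsDomain R] [UniqueFactorizationMonoid R] {N : Type*} [AddCommGroup N] [Module R N]
    [NoZeroSMulDivisors R N] (x : N)
    (P : Submodule R (N ⧸ (R ∙ x))) (hP : P.IsPseudoNull) : P = ⊥ := by
  refine eq_bot_iff.mpr fun y hy ↦ ?_
  obtain ⟨r, s, hrs, hr, hs⟩ := hP y hy
  exact (Submodule.mem_bot R).mpr
    (Submodule.Quotient.eq_zero_of_isRelPrime_of_smul_eq_zero hrs hr hs)

/-- Let `R` be a unique factorization domain, `N` a finitely generated torsion-free
`R`-module and `x ∈ N`.  Then `N/Rx` contains no non-zero pseudo-null `R`-submodule. -/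
theorem pseudoNull_submodule_of_quotient_span_singleton_eq_bot {R : Type*} [CommRing R]
    [IsDomain R] [UniqueFactorizationMonoid R] {N : Type*} [AddCommGroup N] [Module R N]
    [Module.Finite R N] [NoZeroSMulDivisors R N] (x : N)
    (P : Submodule R (N ⧸ (R ∙ x))) (hP : P.IsPseudoNull) : P = ⊥ :=
  pseudoNull_submodule_of_quotient_span_singleton_eq_bot_general x P hP
end

section
/- Let R be an integral domain, p ∈ R a prime element, and u : R² → R² an injective R-linear map (equivalently, an R-linear map with det u ≠ 0). Let C denote the cokernel of u. Then: (a) there is an exact sequence of R-modules 0 → C[p] → (R/pR)² → (R/pR)² → C/pC → 0, in which C[p] is the p-torsion submodule of C, the middle map is the reduction of u modulo p, and the last map is the natural projection; (b) if in addition det u ∈ pR and the reduction of u modulo p is non-zero, then C[p] and C/pC each have rank one as modules over the integral domain R/pR, i.e., each becomes a one-dimensional vector space after base change to the fraction field of R/pR. -/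
/-- The reduction of a linear map `f : M → N` modulo an ideal `I`, i.e. the induced
map `M/IM → N/IN`. -/
def LinearMap.reduceMod {R M N : Type*} [CommRing R] [AddCommGroup M] [Module R M]
    [AddCommGroup N] [Module R N] (I : Ideal R) (f : M →ₗ[R] N) :
    (M ⧸ (I • ⊤ : Submodule R M)) →ₗ[R] (N ⧸ (I • ⊤ : Submodule R N)) :=
  Submodule.mapQ _ _ f (by
    rw [← Submodule.map_le_iff_le_comap, Submodule.map_smul'']
    exact smul_mono_right I le_top)

/-!
Part (a) is the snake lemma for multiplication by `p` on `0 → R² → R² → C → 0` (the left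
vertical kernel vanishes because `R²` has no `p`-torsion), together with right exactness of
reduction modulo `p`. For (b), everything is a module over the domain `k = R/p`: the middle map
`ū` is a nonzero endomorphism of the free module `k²` with `det ū = det u mod p = 0`, so its kernel
and image are both nonzero, and rank–nullity over `k` leaves rank one for the kernel `≅ C[p]` and
the cokernel `≅ C/pC`.
-/

open Function Module TensorProduct

section reduceMod

variable {R M N P : Type*} [CommRing R] [AddCommGroup M] [Module R M] [AddCommGroup N]
  [Module R N] [AddCommGroup P] [Module R P] (I : Ideal R)

@[simp]
lemma LinearMap.reduceMod_mk (f : M →ₗ[R] N) (x : M) :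
    f.reduceMod I (Submodule.Quotient.mk x) = Submodule.Quotient.mk (f x) :=
  rfl

lemma LinearMap.reduceMod_surjective {g : N →ₗ[R] P} (hg : Surjective g) :
    Surjective (g.reduceMod I) := by
  intro z
  obtain ⟨z, rfl⟩ := Submodule.mkQ_surjective _ z
  obtain ⟨y, rfl⟩ := hg z
  exact ⟨Submodule.Quotient.mk y, rfl⟩

lemma Function.Exact.reduceMod {f : M →ₗ[R] N} {g : N →ₗ[R] P} (hfg : Exact f g)
    (hg : Surjective g) : Exact (f.reduceMod I) (g.reduceMod I) := by
  intro y
  obtain ⟨y, rfl⟩ := Submodule.mkQ_surjective _ y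
  constructor
  · intro hy
    have hgy : g y ∈ (I • ⊤ : Submodule R N).map g := by
      rwa [Submodule.map_smul'', Submodule.map_top, LinearMap.range_eq_top.mpr hg,
        ← Submodule.Quotient.mk_eq_zero]
    obtain ⟨y', hy', hgy'⟩ := hgy
    obtain ⟨x, hx⟩ := (hfg (y - y')).mp (by simp [hgy'])
    refine ⟨Submodule.Quotient.mk x, ?_⟩
    rw [LinearMap.reduceMod_mk, hx, Submodule.mkQ_apply, Submodule.Quotient.eq, sub_sub_cancel_left]
    exact neg_mem hy'
  · rintro ⟨x, hx⟩
    obtain ⟨x, rfl⟩ := Submodule.mkQ_surjective _ x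
    simp [← hx, hfg.apply_apply_eq_zero]

end reduceMod

section snake

variable {R M N : Type*} [CommRing R] [AddCommGroup M] [Module R M] [AddCommGroup N]
  [Module R N]

lemma LinearMap.comp_toLinearMap_smul {X Y : Type*} [AddCommGroup X] [Module R X]
    [AddCommGroup Y] [Module R Y] (g : X →ₗ[R] Y) (p : R) :
    g ∘ₗ DistribSMul.toLinearMap R X p = DistribSMul.toLinearMap R Y p ∘ₗ g :=
  LinearMap.ext fun x => map_smul g p x

lemma exact_smul_mkQ_span_singleton_smul_top (p : R) :
    Exact (DistribSMul.toLinearMap R M p) (Ideal.span {p} • ⊤ : Submodule R M).mkQ := by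
  rw [LinearMap.exact_iff, Submodule.ker_mkQ, Submodule.ideal_span_singleton_smul,
    Submodule.pointwise_smul_def, Submodule.map_top]

/-- The connecting map of the snake lemma for multiplication by `p` on
`0 → M → N → N ⧸ f(M) → 0`. -/
lemma exists_injective_exact_torsionBy_reduceMod {f : M →ₗ[R] N} (hf : Injective f) {p : R}
    (hp : IsSMulRegular N p) :
    ∃ δ : Submodule.torsionBy R (N ⧸ LinearMap.range f) p →ₗ[R]
        M ⧸ (Ideal.span {p} • ⊤ : Submodule R M),
      Injective δ ∧ Exact δ (f.reduceMod (Ideal.span {p})) := by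
  have hf₁ := LinearMap.exact_map_mkQ_range f
  have hι := LinearMap.exact_subtype_ker_map (DistribSMul.toLinearMap R (N ⧸ LinearMap.range f) p)
  have hπ := exact_smul_mkQ_span_singleton_smul_top (M := M) p
  have h₁ := LinearMap.comp_toLinearMap_smul f p
  have h₂ := LinearMap.comp_toLinearMap_smul (LinearMap.range f).mkQ p
  have hπ_surj := Submodule.mkQ_surjective (LinearMap.range f)
  refine ⟨SnakeLemma.δ' _ _ _ _ _ hf₁ _ _ hf₁ h₁ h₂ _ hι _ hπ hπ_surj hf, ?_, ?_⟩
  · rw [← LinearMap.exact_zero_iff_injective PUnit]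
    exact SnakeLemma.exact_δ'_right _ _ _ _ _ hf₁ _ _ hf₁ h₁ h₂ 0
      ((LinearMap.exact_zero_iff_injective PUnit _).mpr hp) _ hι _ hπ hπ_surj hf 0
      (LinearMap.ext fun _ => rfl) Subtype.val_injective
  · exact SnakeLemma.exact_δ'_left _ _ _ _ _ hf₁ _ _ hf₁ h₁ h₂ _ hι _ hπ _
      (exact_smul_mkQ_span_singleton_smul_top p) hπ_surj hf _ (LinearMap.ext fun _ => rfl)
      (Submodule.mkQ_surjective _)

end snake

lemma Cardinal.exists_nat_of_add_eq_two {a b : Cardinal} (h : a + b = 2) :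
    ∃ m n : ℕ, a = m ∧ b = n ∧ m + n = 2 := by
  obtain ⟨m, -, rfl⟩ := Cardinal.exists_nat_eq_of_le_nat (n := 2) (h ▸ le_self_add)
  obtain ⟨n, -, rfl⟩ := Cardinal.exists_nat_eq_of_le_nat (n := 2) (h ▸ le_add_self)
  exact ⟨m, n, rfl, rfl, by exact_mod_cast h⟩

lemma Submodule.one_le_rank_of_ne_bot {k V : Type*} [CommRing k] [IsDomain k] [AddCommGroup V]
    [Module k V] [IsTorsionFree k V] {W : Submodule k V} (hW : W ≠ ⊥) :
    1 ≤ Module.rank k W := by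
  rw [Cardinal.one_le_iff_ne_zero, ← pos_iff_ne_zero, rank_pos_iff_exists_ne_zero]
  obtain ⟨x, hx, hx0⟩ := W.ne_bot_iff.mp hW
  exact ⟨⟨x, hx⟩, by simpa using hx0⟩

section rank

universe u v
variable {k : Type v} [CommRing k] [IsDomain k] {A V B : Type u} [AddCommGroup A] [Module k A]
  [AddCommGroup V] [Module k V] [Module.Free k V] [Module.Finite k V] [AddCommGroup B] [Module k B]

lemma LinearMap.rank_ker_eq_one_and_rank_quotient_range_eq_one {φ : V →ₗ[k] V}
    (hV : finrank k V = 2) (hφ : φ ≠ 0) (hdet : LinearMap.det φ = 0) :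
    Module.rank k (LinearMap.ker φ) = 1 ∧ Module.rank k (V ⧸ LinearMap.range φ) = 1 := by
  have hrankV : Module.rank k V = 2 := by rw [← Module.finrank_eq_rank, hV]; rfl
  have hker := Submodule.one_le_rank_of_ne_bot (LinearMap.bot_lt_ker_of_det_eq_zero hdet).ne'
  have hrange := Submodule.one_le_rank_of_ne_bot (mt LinearMap.range_eq_bot.mp hφ)
  obtain ⟨a, b, ha, hb, hab⟩ := Cardinal.exists_nat_of_add_eq_two
    ((LinearMap.rank_range_add_rank_ker φ).trans hrankV)
  obtain ⟨c, a', hc, ha', hca⟩ := Cardinal.exists_nat_of_add_eq_two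
    ((Submodule.rank_quotient_add_rank (LinearMap.range φ)).trans hrankV)
  rw [ha] at hrange ha'
  rw [hb] at hker ⊢
  rw [hc]
  norm_cast at *
  omega

theorem rank_eq_one_of_injective_exact_exact_surjective {f : A →ₗ[k] V} {φ : V →ₗ[k] V}
    {g : V →ₗ[k] B} (hf : Injective f) (hfφ : Exact f φ) (hφg : Exact φ g) (hg : Surjective g)
    (hV : finrank k V = 2) (hφ : φ ≠ 0) (hdet : LinearMap.det φ = 0) :
    Module.rank k A = 1 ∧ Module.rank k B = 1 := by
  obtain ⟨hker, hcoker⟩ := φ.rank_ker_eq_one_and_rank_quotient_range_eq_one hV hφ hdet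
  constructor
  · rw [← rank_range_of_injective f hf, ← hfφ.linearMap_ker_eq, hker]
  · rw [← (g.quotKerEquivOfSurjective hg).rank_eq, hφg.linearMap_ker_eq, hcoker]

end rank

section baseChange

variable {R M : Type*} [CommRing R] [AddCommGroup M] [Module R M] (I : Ideal R)

noncomputable def Submodule.baseChangeEquivQuotSMulTop :
    (R ⧸ I) ⊗[R] M ≃ₗ[R ⧸ I] M ⧸ (I • ⊤ : Submodule R M) :=
  (quotTensorEquivQuotSMul M I).extendScalarsOfSurjective Ideal.Quotient.mk_surjective

instance [Module.Free R M] : Module.Free (R ⧸ I) (M ⧸ (I • ⊤ : Submodule R M)) :=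
  .of_equiv (Submodule.baseChangeEquivQuotSMulTop I)

lemma Module.finrank_quotient_ideal_smul_top [Module.Free R M] [Nontrivial R] [Nontrivial (R ⧸ I)] :
    finrank (R ⧸ I) (M ⧸ (I • ⊤ : Submodule R M)) = finrank R M :=
  (Submodule.baseChangeEquivQuotSMulTop I).finrank_eq.symm.trans (finrank_baseChange)

lemma LinearMap.det_reduceMod_extendScalars [Module.Free R M] [Module.Finite R M]
    (f : M →ₗ[R] M) :
    LinearMap.det ((f.reduceMod I).extendScalarsOfSurjective Ideal.Quotient.mk_surjective) =
      Ideal.Quotient.mk I (LinearMap.det f) := by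
  set e := Submodule.baseChangeEquivQuotSMulTop (M := M) I
  have h : ∀ x, f.reduceMod I (e x) = e (f.baseChange (R ⧸ I) x) := by
    intro x
    induction x using TensorProduct.induction_on with
    | zero => simp
    | tmul a m =>
      obtain ⟨r, rfl⟩ := Ideal.Quotient.mk_surjective a
      simp [e, Submodule.baseChangeEquivQuotSMulTop]
    | add x y hx hy => simp only [map_add, hx, hy]
  have : (f.reduceMod I).extendScalarsOfSurjective Ideal.Quotient.mk_surjective =
      e ∘ₗ f.baseChange (R ⧸ I) ∘ₗ e.symm :=
    LinearMap.ext fun y => by simpa using h (e.symm y)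
  rw [this, LinearMap.det_conj, LinearMap.det_baseChange]
  rfl

end baseChange

/-- Let `R` be an integral domain, `p` a prime element and `u : R² → R²` an injective
linear map with cokernel `C`.  Then (a) there is an exact sequence
`0 → C[p] → (R/p)² → (R/p)² → C/pC → 0` whose middle map is the reduction of `u` mod `p`
and whose last map is the natural projection; and (b) if moreover `det u ∈ pR` and the
reduction of `u` mod `p` is non-zero, then `C[p]` and `C/pC` both have rank one over the
integral domain `R/pR`. -/
theorem cokernel_mod_p_exact_sequence_and_rank {R : Type*} [CommRing R] [IsDomain R]
    (p : R) (hp : Prime p) (u : (Fin 2 → R) →ₗ[R] (Fin 2 → R))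
    (hu : Function.Injective u) :
    (∃ δ : Submodule.torsionBy R ((Fin 2 → R) ⧸ LinearMap.range u) p →ₗ[R]
        ((Fin 2 → R) ⧸ (Ideal.span {p} • ⊤ : Submodule R (Fin 2 → R))),
      Function.Injective δ ∧
      LinearMap.range δ = LinearMap.ker (LinearMap.reduceMod (Ideal.span {p}) u) ∧
      LinearMap.range (LinearMap.reduceMod (Ideal.span {p}) u) =
        LinearMap.ker
          (LinearMap.reduceMod (Ideal.span {p}) (LinearMap.range u).mkQ) ∧
      Function.Surjective
        (LinearMap.reduceMod (Ideal.span {p}) (LinearMap.range u).mkQ)) ∧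
    (LinearMap.det u ∈ Ideal.span {p} →
      LinearMap.reduceMod (Ideal.span {p}) u ≠ 0 →
      Module.rank (R ⧸ Ideal.span {p})
          (Submodule.torsionBy R ((Fin 2 → R) ⧸ LinearMap.range u) p) = 1 ∧
      Module.rank (R ⧸ Ideal.span {p})
          (((Fin 2 → R) ⧸ LinearMap.range u) ⧸
            (Ideal.span {p} • ⊤ :
              Submodule R ((Fin 2 → R) ⧸ LinearMap.range u))) = 1) := by
  obtain ⟨δ, hδ, hδu⟩ := exists_injective_exact_torsionBy_reduceMod hu
    (IsSMulRegular.of_ne_zero (M := Fin 2 → R) hp.ne_zero)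
  have huπ := (LinearMap.exact_map_mkQ_range u).reduceMod (Ideal.span {p})
    (Submodule.mkQ_surjective _)
  have hπ := LinearMap.reduceMod_surjective (Ideal.span {p})
    (Submodule.mkQ_surjective (LinearMap.range u))
  refine ⟨⟨δ, hδ, hδu.linearMap_ker_eq.symm, huπ.linearMap_ker_eq.symm, hπ⟩, fun hdet hne => ?_⟩
  have : (Ideal.span {p}).IsPrime := (Ideal.span_singleton_prime hp.ne_zero).mpr hp
  have hk : Surjective (algebraMap R (R ⧸ Ideal.span {p})) := Ideal.Quotient.mk_surjective
  refine rank_eq_one_of_injective_exact_exact_surjective (f := δ.extendScalarsOfSurjective hk)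
    (φ := (u.reduceMod _).extendScalarsOfSurjective hk)
    (g := ((LinearMap.range u).mkQ.reduceMod _).extendScalarsOfSurjective hk)
    hδ hδu huπ hπ ?_ ?_ ?_
  · rw [Module.finrank_quotient_ideal_smul_top, Module.finrank_fin_fun]
  · exact fun h => hne (LinearMap.ext fun x => LinearMap.congr_fun h x)
  · rw [LinearMap.det_reduceMod_extendScalars, Ideal.Quotient.eq_zero_iff_mem]
    exact hdet
end

section
/- Let R be a commutative Noetherian local unique factorization domain with maximal ideal 𝔪 and residue field k = R/𝔪, and assume that R/pR is a discrete valuation ring for every prime element p of R. Let G be a group, let M and N be free R-modules of rank 2, each equipped with an action of G by R-module automorphisms, and let u : M → N be a G-equivariant R-linear map such that the induced map M ⊗_R Frac(R) → N ⊗_R Frac(R) is an isomorphism and such that, for every prime element p of R, the induced map M/pM → N/pN is non-zero. If the two-dimensional k-vector space N/𝔪N has no G-stable k-subspace other than 0 and N/𝔪N itself, then u is an isomorphism of R-modules. -/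
/-!
Let `A` be the matrix of `u`. Since `u` becomes an isomorphism over `Frac R`, `det A ≠ 0`, so it
suffices that no prime `p` divides `det A`. Modulo `p` the matrix is nonzero, so over the DVR
`R/p` it factors as `π ^ e • B` with some entry of `B` a unit. `B` still intertwines the two
representations, and its reduction to the residue field is a nonzero intertwiner into the
irreducible `N/𝔪N`: its column space is stable, hence everything, so it is invertible. But its
determinant is the image of `det B`, which vanishes because `p ∣ det A`.
-/

open Matrix IsLocalRing

def Matrix.IsIrreducibleFamily {G ι K : Type*} [CommRing K] [Fintype ι]
    (Y : G → Matrix ι ι K) : Prop :=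
  ∀ W : Submodule K (ι → K), (∀ g, ∀ v ∈ W, Y g *ᵥ v ∈ W) → W = ⊥ ∨ W = ⊤

theorem isUnit_of_forall_prime_not_dvd {α : Type*} [CommMonoidWithZero α]
    [UniqueFactorizationMonoid α] {a : α} (ha : a ≠ 0) (h : ∀ p, Prime p → ¬p ∣ a) :
    IsUnit a := by
  by_contra hu
  obtain ⟨p, hp, hpa⟩ := WfDvdMonoid.exists_irreducible_factor hu ha
  exact h p (UniqueFactorizationMonoid.irreducible_iff_prime.mp hp) hpa

theorem Matrix.exists_eq_pow_smul_of_ne_zero {D m n : Type*} [CommRing D] [IsDomain D]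
    [IsDiscreteValuationRing D] {A : Matrix m n D} (hA : A ≠ 0) {π : D} (hπ : Irreducible π) :
    ∃ (e : ℕ) (B : Matrix m n D), A = π ^ e • B ∧ ∃ i j, IsUnit (B i j) := by
  set J := Ideal.span (Set.range fun ij : m × n => A ij.1 ij.2)
  have hJ : J ≠ ⊥ := by
    rw [Ne, Ideal.span_eq_bot]
    exact fun h => hA (ext fun i j => h _ ⟨(i, j), rfl⟩)
  obtain ⟨e, he⟩ := IsDiscreteValuationRing.ideal_eq_span_pow_irreducible hJ hπ
  have hdvd (i j) : π ^ e ∣ A i j :=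
    Ideal.mem_span_singleton.mp (he ▸ Ideal.subset_span ⟨(i, j), rfl⟩)
  choose B hB using hdvd
  refine ⟨e, of B, ext fun i j => hB i j, ?_⟩
  by_contra! hB_nonunit
  have hπB (i j) : π ∣ B i j := by
    rw [← Ideal.mem_span_singleton,
      ← (IsDiscreteValuationRing.irreducible_iff_uniformizer π).mp hπ]
    exact hB_nonunit i j
  -- the entries of `A` generate `(π ^ e)`, yet would all lie in `(π ^ (e + 1))`
  have hle : J ≤ Ideal.span {π ^ (e + 1)} := by
    rw [Ideal.span_le]
    rintro _ ⟨⟨i, j⟩, rfl⟩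
    rw [SetLike.mem_coe, Ideal.mem_span_singleton]
    change π ^ (e + 1) ∣ A i j
    rw [hB i j, pow_succ]
    exact mul_dvd_mul_left _ (hπB i j)
  have : π ^ (e + 1) ∣ π ^ e :=
    Ideal.mem_span_singleton.mp (hle (he ▸ Ideal.mem_span_singleton_self _))
  rw [pow_dvd_pow_iff hπ.ne_zero hπ.not_isUnit] at this
  omega

section Intertwining

variable {G ι : Type*} [Fintype ι] [DecidableEq ι]

theorem Matrix.IsIrreducibleFamily.isUnit_of_intertwining {K : Type*} [CommRing K]
    {X Y : G → Matrix ι ι K} (hY : IsIrreducibleFamily Y) {B : Matrix ι ι K}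
    (hB : ∀ g, B * X g = Y g * B) (hB0 : B ≠ 0) : IsUnit B := by
  rw [← mulVec_surjective_iff_isUnit]
  change Function.Surjective B.mulVecLin
  rw [← LinearMap.range_eq_top]
  refine (hY _ ?_).resolve_left ?_
  · rintro g _ ⟨v, rfl⟩
    exact ⟨X g *ᵥ v, by simp [mulVec_mulVec, hB g]⟩
  · rw [LinearMap.range_eq_bot]
    intro h
    exact hB0 <| ext fun i j => by
      simpa using congr_fun (LinearMap.congr_fun h (Pi.single j 1)) i

theorem Matrix.det_ne_zero_of_intertwining {D K : Type*} [CommRing D] [IsDomain D]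
    [IsDiscreteValuationRing D] [CommRing K] [Nontrivial K] (ν : D →+* K)
    {X Y : G → Matrix ι ι D}
    (hY : IsIrreducibleFamily fun g => (Y g).map ν) {A : Matrix ι ι D}
    (hA : ∀ g, A * X g = Y g * A) (hA0 : A ≠ 0) : A.det ≠ 0 := by
  obtain ⟨π, hπ⟩ := IsDiscreteValuationRing.exists_irreducible D
  obtain ⟨e, B, rfl, i, j, hij⟩ := exists_eq_pow_smul_of_ne_zero hA0 hπ
  have hπe : π ^ e ≠ 0 := pow_ne_zero _ hπ.ne_zero
  have hB (g : G) : B * X g = Y g * B :=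
    smul_right_injective _ hπe (by simpa only [Matrix.smul_mul, Matrix.mul_smul] using hA g)
  have hb : IsUnit (B.map ν) := by
    refine hY.isUnit_of_intertwining (X := fun g => (X g).map ν)
      (fun g => by simp only [← Matrix.map_mul, hB g]) fun h => (hij.map ν).ne_zero ?_
    simpa using congr_fun (congr_fun h i) j
  rw [det_smul]
  refine mul_ne_zero (pow_ne_zero _ hπe) fun h => ?_
  rw [isUnit_iff_isUnit_det, ← RingHom.mapMatrix_apply, ← RingHom.map_det, h, map_zero] at hb
  exact not_isUnit_zero hb

theorem Matrix.det_notMem_of_intertwining {R : Type*} [CommRing R] [IsLocalRing R] (P : Ideal R)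
    [P.IsPrime] [IsDiscreteValuationRing (R ⧸ P)] {X Y : G → Matrix ι ι R}
    (hY : IsIrreducibleFamily fun g => (Y g).map (Ideal.Quotient.mk (maximalIdeal R)))
    {A : Matrix ι ι R} (hA : ∀ g, A * X g = Y g * A) (hA0 : A.map (Ideal.Quotient.mk P) ≠ 0) :
    A.det ∉ P := by
  let ν := Ideal.Quotient.factor (le_maximalIdeal (Ideal.IsPrime.ne_top ‹_›))
  have hν (Z : Matrix ι ι R) :
      (Z.map (Ideal.Quotient.mk P)).map ν = Z.map (Ideal.Quotient.mk _) := by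
    rw [Matrix.map_map, ← RingHom.coe_comp, Ideal.Quotient.factor_comp_mk]
  have hdet := det_ne_zero_of_intertwining ν (X := fun g => (X g).map (Ideal.Quotient.mk P))
    (Y := fun g => (Y g).map (Ideal.Quotient.mk P)) (by simpa only [hν] using hY)
    (fun g => by simp only [← Matrix.map_mul, hA g]) hA0
  rwa [← RingHom.mapMatrix_apply, ← RingHom.map_det, Ne, Ideal.Quotient.eq_zero_iff_mem] at hdet

end Intertwining

section Coordinates

variable {R M N ι κ : Type*} [CommRing R] [AddCommGroup M] [Module R M] [AddCommGroup N]
  [Module R N] [Fintype ι]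

theorem LinearMap.det_toMatrix_ne_zero_of_bijective_baseChange [DecidableEq ι] (A : Type*)
    [CommRing A] [Nontrivial A] [Algebra R A] (bM : Module.Basis ι R M)
    (bN : Module.Basis ι R N)
    {u : M →ₗ[R] N} (hu : Function.Bijective (u.baseChange A)) : (toMatrix bM bN u).det ≠ 0 := by
  intro h
  have := LinearEquiv.isUnit_det (LinearEquiv.ofBijective _ hu)
    (Algebra.TensorProduct.basis A bM) (Algebra.TensorProduct.basis A bN)
  rw [show (LinearEquiv.ofBijective _ hu : _ →ₗ[A] _) = u.baseChange A from rfl,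
    toMatrix_baseChange, ← RingHom.mapMatrix_apply, ← RingHom.map_det, h, map_zero] at this
  exact not_isUnit_zero this

theorem LinearMap.bijective_of_isUnit_det_toMatrix [DecidableEq ι] (bM : Module.Basis ι R M)
    (bN : Module.Basis ι R N) {u : M →ₗ[R] N} (h : IsUnit (toMatrix bM bN u).det) :
    Function.Bijective u := by
  rw [← LinearEquiv.coe_ofIsUnitDet h, LinearEquiv.coe_coe]
  exact (LinearEquiv.ofIsUnitDet h).bijective

theorem LinearMap.map_toMatrix_ne_zero_of_reduceMod_ne_zero [Fintype κ] [DecidableEq κ]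
    (bM : Module.Basis κ R M) (bN : Module.Basis ι R N) {I : Ideal R} {u : M →ₗ[R] N}
    (hu : reduceMod I u ≠ 0) : (toMatrix bM bN u).map (Ideal.Quotient.mk I) ≠ 0 := by
  contrapose! hu
  refine Submodule.linearMap_qext _ (bM.ext fun j => ?_)
  simp only [coe_comp, Function.comp_apply, Submodule.mkQ_apply, reduceMod, Submodule.mapQ_apply,
    zero_apply, Submodule.Quotient.mk_eq_zero]
  rw [← Matrix.toLin_toMatrix bM bN u, Matrix.toLin_self]
  refine Submodule.sum_mem _ fun i _ => Submodule.smul_mem_smul ?_ Submodule.mem_top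
  simpa [Ideal.Quotient.eq_zero_iff_mem] using congr_fun (congr_fun hu i) j

variable (I : Ideal R) (b : Module.Basis ι R N)

noncomputable def Module.Basis.coordsMod : N ⧸ (I • ⊤ : Submodule R N) →ₗ[R] ι → R ⧸ I :=
  (I • ⊤ : Submodule R N).liftQ (LinearMap.compLeft I.mkQ ι ∘ₗ b.equivFun) <|
    Submodule.smul_le.mpr fun r hr x _ => by
      ext i
      simp [Algebra.smul_def, ← map_mul, Ideal.Quotient.eq_zero_iff_mem, I.mul_mem_right _ hr]

theorem Module.Basis.coordsMod_mk (x : N) :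
    b.coordsMod I (Submodule.Quotient.mk x) = fun i => Ideal.Quotient.mk I (b.repr x i) :=
  rfl

theorem Module.Basis.coordsMod_surjective : Function.Surjective (b.coordsMod I) := by
  intro v
  obtain ⟨c, rfl⟩ := Function.Surjective.comp_left Ideal.Quotient.mk_surjective v
  refine ⟨Submodule.Quotient.mk (b.equivFun.symm c), ?_⟩
  rw [coordsMod_mk, ← b.equivFun_apply, LinearEquiv.apply_symm_apply]
  rfl

theorem Module.Basis.coordsMod_reduceMod [DecidableEq ι] (f : N →ₗ[R] N)
    (x : N ⧸ (I • ⊤ : Submodule R N)) :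
    b.coordsMod I (LinearMap.reduceMod I f x)
      = (LinearMap.toMatrix b b f).map (Ideal.Quotient.mk I) *ᵥ b.coordsMod I x := by
  induction x using Submodule.Quotient.induction_on with | _ x
  ext i
  rw [LinearMap.reduceMod, Submodule.mapQ_apply, coordsMod_mk, coordsMod_mk,
    ← LinearMap.toMatrix_mulVec_repr b b]
  exact RingHom.map_mulVec _ _ _ i

theorem Module.Basis.isIrreducibleFamily_map_toMatrix [DecidableEq ι] {G : Type*}
    (f : G → N →ₗ[R] N)
    (hirr : ∀ W : Submodule R (N ⧸ (I • ⊤ : Submodule R N)),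
      (∀ g, ∀ x ∈ W, LinearMap.reduceMod I (f g) x ∈ W) → W = ⊥ ∨ W = ⊤) :
    IsIrreducibleFamily fun g => (LinearMap.toMatrix b b (f g)).map (Ideal.Quotient.mk I) := by
  intro W hW
  have hmap := Submodule.map_comap_eq_of_surjective (b.coordsMod_surjective I)
    (W.restrictScalars R)
  refine (hirr ((W.restrictScalars R).comap (b.coordsMod I)) fun g x hx => ?_).imp
    (fun h => ?_) fun h => ?_
  · rw [Submodule.mem_comap, coordsMod_reduceMod]
    exact hW g _ hx
  · rwa [h, Submodule.map_bot, eq_comm, Submodule.restrictScalars_eq_bot_iff] at hmap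
  · rwa [h, Submodule.map_top, LinearMap.range_eq_top.mpr (b.coordsMod_surjective I), eq_comm,
      Submodule.restrictScalars_eq_top_iff] at hmap

end Coordinates

theorem bijective_of_residually_irreducible_general {R : Type*} [CommRing R] [IsDomain R]
    [UniqueFactorizationMonoid R] [IsLocalRing R]
    (hdvr : ∀ p : R, (hp : Prime p) →
      haveI : (Ideal.span {p}).IsPrime := (Ideal.span_singleton_prime hp.ne_zero).mpr hp
      IsDiscreteValuationRing (R ⧸ Ideal.span {p}))
    {G : Type*} [Group G] {M N : Type*} [AddCommGroup M] [Module R M]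
    [AddCommGroup N] [Module R N] [Module.Free R M] [Module.Finite R M]
    [Module.Free R N] [Module.Finite R N]
    (hM : Module.finrank R M = 2) (hN : Module.finrank R N = 2)
    (ρM : G →* (M ≃ₗ[R] M)) (ρN : G →* (N ≃ₗ[R] N)) (u : M →ₗ[R] N)
    (hequiv : ∀ g : G, u ∘ₗ (ρM g : M →ₗ[R] M) = (ρN g : N →ₗ[R] N) ∘ₗ u)
    (hfrac : Function.Bijective (LinearMap.baseChange (FractionRing R) u))
    (hmodp : ∀ p : R, Prime p → LinearMap.reduceMod (Ideal.span {p}) u ≠ 0)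
    (hirr : ∀ W : Submodule R
        (N ⧸ ((IsLocalRing.maximalIdeal R) • ⊤ : Submodule R N)),
      (∀ g : G, ∀ x ∈ W,
        LinearMap.reduceMod (IsLocalRing.maximalIdeal R) (ρN g : N →ₗ[R] N) x ∈ W) →
      W = ⊥ ∨ W = ⊤) :
    Function.Bijective u := by
  let bM := Module.finBasisOfFinrankEq R M hM
  let bN := Module.finBasisOfFinrankEq R N hN
  have hintertwine (g : G) : LinearMap.toMatrix bM bN u * LinearMap.toMatrix bM bM (ρM g)
      = LinearMap.toMatrix bN bN (ρN g) * LinearMap.toMatrix bM bN u := by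
    rw [← LinearMap.toMatrix_comp, ← LinearMap.toMatrix_comp, hequiv g]
  have hY := bN.isIrreducibleFamily_map_toMatrix _ (fun g => (ρN g : N →ₗ[R] N)) hirr
  refine LinearMap.bijective_of_isUnit_det_toMatrix bM bN <| isUnit_of_forall_prime_not_dvd
    (LinearMap.det_toMatrix_ne_zero_of_bijective_baseChange _ bM bN hfrac) fun p hp hdvd => ?_
  have := (Ideal.span_singleton_prime hp.ne_zero).mpr hp
  have := hdvr p hp
  exact det_notMem_of_intertwining _ hY hintertwine
    (LinearMap.map_toMatrix_ne_zero_of_reduceMod_ne_zero bM bN (hmodp p hp))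
    (Ideal.mem_span_singleton.mpr hdvd)

/-- Let `R` be a Noetherian local UFD whose quotient by every prime element is a discrete
valuation ring.  Let `G` act on free rank-two `R`-modules `M` and `N`, and let
`u : M → N` be a `G`-equivariant map which is an isomorphism after base change to
`Frac(R)` and is non-zero modulo every prime element of `R`.  If the residual
representation `N/𝔪N` has no non-trivial `G`-stable subspace, then `u` is an
isomorphism. -/
theorem bijective_of_residually_irreducible {R : Type*} [CommRing R] [IsDomain R]
    [UniqueFactorizationMonoid R] [IsNoetherianRing R] [IsLocalRing R]
    (hdvr : ∀ p : R, (hp : Prime p) →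
      haveI : (Ideal.span {p}).IsPrime := (Ideal.span_singleton_prime hp.ne_zero).mpr hp
      IsDiscreteValuationRing (R ⧸ Ideal.span {p}))
    {G : Type*} [Group G] {M N : Type*} [AddCommGroup M] [Module R M]
    [AddCommGroup N] [Module R N] [Module.Free R M] [Module.Finite R M]
    [Module.Free R N] [Module.Finite R N]
    (hM : Module.finrank R M = 2) (hN : Module.finrank R N = 2)
    (ρM : G →* (M ≃ₗ[R] M)) (ρN : G →* (N ≃ₗ[R] N)) (u : M →ₗ[R] N)
    (hequiv : ∀ g : G, u ∘ₗ (ρM g : M →ₗ[R] M) = (ρN g : N →ₗ[R] N) ∘ₗ u)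
    (hfrac : Function.Bijective (LinearMap.baseChange (FractionRing R) u))
    (hmodp : ∀ p : R, Prime p → LinearMap.reduceMod (Ideal.span {p}) u ≠ 0)
    (hirr : ∀ W : Submodule R
        (N ⧸ ((IsLocalRing.maximalIdeal R) • ⊤ : Submodule R N)),
      (∀ g : G, ∀ x ∈ W,
        LinearMap.reduceMod (IsLocalRing.maximalIdeal R) (ρN g : N →ₗ[R] N) x ∈ W) →
      W = ⊥ ∨ W = ⊤) :
    Function.Bijective u :=
  bijective_of_residually_irreducible_general hdvr hM hN ρM ρN u hequiv hfrac hmodp hirr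
end

section
/- Let O be an integral domain and r ∈ O a non-zero element. Let H be an O-module with torsion submodule H_tor, and B ⊆ H a submodule, whose torsion submodule equals B_tor = B ∩ H_tor. Set Q := H/(H_tor + B). Then the kernel of the natural map B/(B_tor + rB) → H/(H_tor + rH), induced by the inclusion B ⊆ H, is isomorphic to the r-torsion submodule Q[r] of Q. In particular, if Q has no non-zero r-torsion, then every x ∈ B with x ∈ rH + H_tor satisfies x ∈ rB + B_tor. -/
/-!
Both sides are quotients of the module of pairs `(b, h) ∈ B × H` with `b ≡ r • h` modulo
torsion: projecting to `b` maps it onto the kernel, projecting to `h` maps it onto `Q[r]`.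
The two projections have the same kernel because, `r` being a non-zero-divisor, `r • y` is
torsion only if `y` is.
-/

open Submodule

open scoped nonZeroDivisors

namespace Submodule

theorem mem_torsion_of_smul_mem_torsion {R M : Type*} [CommSemiring R] [AddCommMonoid M]
    [Module R M] {r : R} (hr : r ∈ R⁰) {x : M} (hx : r • x ∈ torsion R M) :
    x ∈ torsion R M := by
  obtain ⟨a, ha⟩ := hx
  exact ⟨a * ⟨r, hr⟩, by rwa [mul_smul]⟩

theorem mem_sup_iff_exists_sub_mem {R M : Type*} [Ring R] [AddCommGroup M] [Module R M]
    {p q : Submodule R M} {x : M} :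
    x ∈ p ⊔ q ↔ ∃ y ∈ q, x - y ∈ p := by
  rw [mem_sup]
  constructor
  · rintro ⟨z, hz, y, hy, rfl⟩
    exact ⟨y, hy, by rwa [add_sub_cancel_right]⟩
  · rintro ⟨y, hy, hxy⟩
    exact ⟨x - y, hxy, y, hy, sub_add_cancel x y⟩

theorem torsionBy_quotient_eq_map_comap {R M : Type*} [CommRing R] [AddCommGroup M] [Module R M]
    (p : Submodule R M) (r : R) :
    torsionBy R (M ⧸ p) r = map p.mkQ (comap (r • LinearMap.id) p) := by
  ext q
  obtain ⟨x, rfl⟩ := p.mkQ_surjective q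
  have hle : p ≤ comap (r • LinearMap.id) p := fun y hy ↦ p.smul_mem r hy
  rw [mem_torsionBy_iff, mkQ_apply, ← Quotient.mk_smul, Quotient.mk_eq_zero, ← mkQ_apply,
    ← mem_comap, comap_map_mkQ, sup_eq_right.mpr hle]
  rfl

end Submodule

namespace LinearMap

variable {R M N P : Type*} [Ring R] [AddCommGroup M] [AddCommGroup N] [AddCommGroup P]
  [Module R M] [Module R N] [Module R P]

noncomputable def rangeEquivOfKerEq (f : M →ₗ[R] N) (g : M →ₗ[R] P) (h : ker f = ker g) :
    range f ≃ₗ[R] range g :=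
  f.quotKerEquivRange.symm ≪≫ₗ quotEquivOfEq _ _ h ≪≫ₗ g.quotKerEquivRange

end LinearMap

section SMulGraph

variable {O H : Type*} [CommRing O] [AddCommGroup H] [Module O H] (r : O) (B : Submodule O H)

def smulGraphModTorsion : Submodule O (B × H) :=
  comap (B.subtype ∘ₗ LinearMap.fst O B H - r • LinearMap.snd O B H) (torsion O H)

variable {r B} in
theorem mem_smulGraphModTorsion {p : B × H} :
    p ∈ smulGraphModTorsion r B ↔ (p.1 : H) - r • p.2 ∈ torsion O H :=
  Iff.rfl

namespace smulGraphModTorsion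

theorem map_fst :
    map (LinearMap.fst O B H) (smulGraphModTorsion r B) =
      comap B.subtype (torsion O H ⊔ map (r • LinearMap.id) ⊤) := by
  ext b
  simp [mem_sup_iff_exists_sub_mem, mem_smulGraphModTorsion]

theorem map_snd :
    map (LinearMap.snd O B H) (smulGraphModTorsion r B) =
      comap (r • LinearMap.id) (torsion O H ⊔ B) := by
  ext h
  simp [mem_sup_iff_exists_sub_mem, mem_smulGraphModTorsion, sub_mem_comm_iff]

noncomputable def fstQ : smulGraphModTorsion r B →ₗ[O]
    B ⧸ comap B.subtype ((B ⊓ torsion O H) ⊔ map (r • LinearMap.id) B) :=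
  mkQ _ ∘ₗ LinearMap.fst O B H ∘ₗ (smulGraphModTorsion r B).subtype

noncomputable def sndQ : smulGraphModTorsion r B →ₗ[O] H ⧸ (torsion O H ⊔ B) :=
  mkQ _ ∘ₗ LinearMap.snd O B H ∘ₗ (smulGraphModTorsion r B).subtype

theorem range_fstQ
    (h : comap B.subtype ((B ⊓ torsion O H) ⊔ map (r • LinearMap.id) B) ≤
      comap B.subtype (torsion O H ⊔ map (r • LinearMap.id) ⊤)) :
    LinearMap.range (fstQ r B) = LinearMap.ker (mapQ _ _ B.subtype h) := by
  rw [fstQ, LinearMap.range_comp, LinearMap.range_comp, range_subtype, map_fst, ker_mapQ]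

theorem range_sndQ : LinearMap.range (sndQ r B) = torsionBy O (H ⧸ (torsion O H ⊔ B)) r := by
  rw [sndQ, LinearMap.range_comp, LinearMap.range_comp, range_subtype, map_snd,
    torsionBy_quotient_eq_map_comap]

theorem ker_fstQ_eq_ker_sndQ (hr : r ∈ O⁰) :
    LinearMap.ker (fstQ r B) = LinearMap.ker (sndQ r B) := by
  ext ⟨⟨b, h⟩, hbh⟩
  rw [mem_smulGraphModTorsion] at hbh
  simp only [fstQ, sndQ, LinearMap.mem_ker, LinearMap.comp_apply, mkQ_apply,
    Quotient.mk_eq_zero, mem_comap, subtype_apply, LinearMap.fst_apply, LinearMap.snd_apply,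
    mem_sup_iff_exists_sub_mem]
  constructor
  · rintro ⟨_, ⟨c, hc, rfl⟩, -, hbc⟩
    refine ⟨c, hc, mem_torsion_of_smul_mem_torsion hr ?_⟩
    convert sub_mem hbc hbh using 1
    simp only [LinearMap.smul_apply, LinearMap.id_apply, smul_sub]
    abel
  · rintro ⟨c, hc, hhc⟩
    have hbc : (b : H) - r • c = (b - r • h) + r • (h - c) := by rw [smul_sub]; abel
    refine ⟨r • c, ⟨c, hc, rfl⟩, sub_mem b.2 (B.smul_mem r hc), ?_⟩
    rw [hbc]
    exact add_mem hbh (smul_mem _ r hhc)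

end smulGraphModTorsion

end SMulGraph

/-- Let `O` be an integral domain, `r ∈ O` non-zero, `H` an `O`-module with torsion
submodule `H_tor`, and `B ⊆ H` a submodule (whose torsion submodule is
`B_tor = B ∩ H_tor`).  Set `Q := H/(H_tor + B)`.  Then the kernel of the natural map
`B/(B_tor + rB) → H/(H_tor + rH)` is isomorphic to the `r`-torsion submodule `Q[r]` of
`Q`.  In particular, if `Q` has no non-zero `r`-torsion, then every `x ∈ B` with
`x ∈ rH + H_tor` satisfies `x ∈ rB + B_tor`. -/
theorem ker_quotient_map_iso_torsionBy {O H : Type*} [CommRing O] [IsDomain O]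
    [AddCommGroup H] [Module O H] (r : O) (hr : r ≠ 0) (B : Submodule O H) :
    let tor : Submodule O H := Submodule.torsion O H
    let rH : Submodule O H := Submodule.map (r • (LinearMap.id : H →ₗ[O] H)) ⊤
    let rB : Submodule O H := Submodule.map (r • (LinearMap.id : H →ₗ[O] H)) B
    let f : (↥B ⧸ Submodule.comap B.subtype ((B ⊓ tor) ⊔ rB)) →ₗ[O]
        (H ⧸ (tor ⊔ rH)) :=
      Submodule.mapQ _ _ B.subtype
        (Submodule.comap_mono (sup_le (inf_le_right.trans le_sup_left)
          ((Submodule.map_mono le_top).trans le_sup_right)))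
    Nonempty
      (↥(LinearMap.ker f) ≃ₗ[O]
        ↥(Submodule.torsionBy O (H ⧸ (tor ⊔ B)) r)) ∧
    (Submodule.torsionBy O (H ⧸ (tor ⊔ B)) r = ⊥ →
      ∀ x ∈ B, x ∈ rH ⊔ tor → x ∈ rB ⊔ (B ⊓ tor)) := by
  intro tor rH rB f
  have e : LinearMap.ker f ≃ₗ[O] torsionBy O (H ⧸ (tor ⊔ B)) r :=
    LinearEquiv.ofEq _ _ (smulGraphModTorsion.range_fstQ r B _).symm ≪≫ₗ
      LinearMap.rangeEquivOfKerEq _ _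
        (smulGraphModTorsion.ker_fstQ_eq_ker_sndQ r B (mem_nonZeroDivisors_of_ne_zero hr)) ≪≫ₗ
      LinearEquiv.ofEq _ _ (smulGraphModTorsion.range_sndQ r B)
  refine ⟨⟨e⟩, fun hQ x hxB hx ↦ ?_⟩
  have : Subsingleton (torsionBy O (H ⧸ (tor ⊔ B)) r) := by rw [hQ]; infer_instance
  have := e.toEquiv.subsingleton
  have hf : LinearMap.ker f = ⊥ := eq_bot_of_subsingleton
  have hfx : f (Submodule.Quotient.mk ⟨x, hxB⟩) = 0 := by
    rw [mapQ_apply, Quotient.mk_eq_zero]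
    exact sup_comm rH tor ▸ hx
  rw [← LinearMap.mem_ker, hf, mem_bot, Quotient.mk_eq_zero, sup_comm] at hfx
  exact hfx
end
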